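/- Let d, n ∈ ℕ, let v : Fin (n+1) → Fin d → ℕ be a family of nonnegative counter valuations (v_0 initial, v_n final), let w : Fin (n+1) → ℕ be the values of an additional controlling counter, and let S : Fin d → Set (Fin (n+1)) assign to each counter the set of test positions. Define N_{j,i} = |{ k ∈ S_i : k ≥ j }|. Suppose: (1) w_0 = Σ_i N_{0,i} · v_0(i); (2) for each j ∈ {1,…,n}, w_j − w_{j−1} = Σ_i N_{j,i} · (v_j(i) − v_{j−1}(i)) (as integers); and (3) w_n = 0. Then for every i and every j ∈ S_i we have v_j(i) = 0. -/
import Mathlib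


theorem stmt11 (d n : ℕ) (v : Fin (n + 1) → Fin d → ℕ) (w : Fin (n + 1) → ℕ)
    (S : Fin d → Finset (Fin (n + 1)))
    (N : Fin (n + 1) → Fin d → ℕ)
    (hN : ∀ j i, N j i = ((S i).filter fun k => j ≤ k).card)
    (h1 : (w 0 : ℤ) = ∑ i, (N 0 i : ℤ) * (v 0 i : ℤ))
    (h2 : ∀ j : Fin n,
      (w j.succ : ℤ) - (w j.castSucc : ℤ)
        = ∑ i, (N j.succ i : ℤ) * ((v j.succ i : ℤ) - (v j.castSucc i : ℤ)))
    (h3 : w (Fin.last n) = 0) :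
    ∀ i : Fin d, ∀ j ∈ S i, v j i = 0 := by
  have key : ∀ j : Fin (n + 1), (w j : ℤ)
      = ∑ i, ∑ k ∈ S i, (if j ≤ k then (v j i : ℤ) else (v k i : ℤ)) := by
    intro j
    induction j using Fin.induction with
    | zero =>
      rw [h1]
      refine Finset.sum_congr rfl fun i _ => ?_
      rw [Finset.sum_congr rfl (fun k hk => if_pos (Fin.zero_le k)),
        Finset.sum_const, hN,
        Finset.filter_true_of_mem (fun k _ => Fin.zero_le k)]
      push_cast
      ring
    | succ j ih =>
      have step : ∀ i : Fin d,
          ∑ k ∈ S i, ((if j.succ ≤ k then (v j.succ i : ℤ) else (v k i : ℤ))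
            - (if j.castSucc ≤ k then (v j.castSucc i : ℤ) else (v k i : ℤ)))
          = (N j.succ i : ℤ) * ((v j.succ i : ℤ) - (v j.castSucc i : ℤ)) := by
        intro i
        rw [← Finset.sum_filter_add_sum_filter_not (S i) (fun k => j.succ ≤ k)]
        have hA : ∑ k ∈ (S i).filter (fun k => j.succ ≤ k),
            ((if j.succ ≤ k then (v j.succ i : ℤ) else (v k i : ℤ))
              - (if j.castSucc ≤ k then (v j.castSucc i : ℤ) else (v k i : ℤ)))
            = ((S i).filter (fun k => j.succ ≤ k)).card
              * ((v j.succ i : ℤ) - (v j.castSucc i : ℤ)) := by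
          rw [Finset.sum_congr rfl (fun k hk => ?_), Finset.sum_const,
            nsmul_eq_mul]
          rw [Finset.mem_filter] at hk
          have h1k : j.succ ≤ k := hk.2
          have h2k : j.castSucc ≤ k := by
            simp only [Fin.le_def, Fin.coe_castSucc, Fin.val_succ] at h1k ⊢
            omega
          rw [if_pos h1k, if_pos h2k]
        have hB : ∑ k ∈ (S i).filter (fun k => ¬ j.succ ≤ k),
            ((if j.succ ≤ k then (v j.succ i : ℤ) else (v k i : ℤ))
              - (if j.castSucc ≤ k then (v j.castSucc i : ℤ) else (v k i : ℤ)))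
            = 0 := by
          refine Finset.sum_eq_zero fun k hk => ?_
          rw [Finset.mem_filter] at hk
          rw [if_neg hk.2]
          by_cases hc : j.castSucc ≤ k
          · have hkk : k = j.castSucc := by
              have h2' : ¬ (j : ℕ) + 1 ≤ (k : ℕ) := by
                simpa [Fin.le_def] using hk.2
              have hc' : (j : ℕ) ≤ (k : ℕ) := by
                simpa [Fin.le_def] using hc
              exact Fin.ext (by simp only [Fin.coe_castSucc]; omega)
            rw [if_pos hc, hkk]
            ring
          · rw [if_neg hc]; ring
        rw [hA, hB, hN, add_zero]
      have h2j := h2 j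
      have hsum : ∑ i, ∑ k ∈ S i,
          ((if j.succ ≤ k then (v j.succ i : ℤ) else (v k i : ℤ))
            - (if j.castSucc ≤ k then (v j.castSucc i : ℤ) else (v k i : ℤ)))
          = ∑ i, (N j.succ i : ℤ) * ((v j.succ i : ℤ) - (v j.castSucc i : ℤ)) :=
        Finset.sum_congr rfl fun i _ => step i
      have hdist : ∑ i, ∑ k ∈ S i,
          ((if j.succ ≤ k then (v j.succ i : ℤ) else (v k i : ℤ))
            - (if j.castSucc ≤ k then (v j.castSucc i : ℤ) else (v k i : ℤ)))
          = (∑ i, ∑ k ∈ S i, (if j.succ ≤ k then (v j.succ i : ℤ) else (v k i : ℤ)))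
            - ∑ i, ∑ k ∈ S i, (if j.castSucc ≤ k then (v j.castSucc i : ℤ) else (v k i : ℤ)) := by
        rw [← Finset.sum_sub_distrib]
        exact Finset.sum_congr rfl fun i _ => by rw [← Finset.sum_sub_distrib]
      rw [hdist, ← ih] at hsum
      linarith [hsum, h2j]
  have hlast := key (Fin.last n)
  rw [h3] at hlast
  have he : (∑ i, ∑ k ∈ S i, (if Fin.last n ≤ k then (v (Fin.last n) i : ℤ)
      else (v k i : ℤ))) = ∑ i, ∑ k ∈ S i, (v k i : ℤ) := by
    refine Finset.sum_congr rfl fun i _ => Finset.sum_congr rfl fun k hk => ?_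
    by_cases hc : Fin.last n ≤ k
    · have : k = Fin.last n := le_antisymm (Fin.le_last k) hc
      rw [if_pos hc, this]
    · rw [if_neg hc]
  have hlast' : (0 : ℤ) = ∑ i, ∑ k ∈ S i, (v k i : ℤ) := by
    rw [← he]
    exact_mod_cast hlast
  intro i j hj
  have hz : ∀ i ∈ Finset.univ, ∀ k ∈ S i, (v k i : ℤ) = 0 := by
    have h := (Finset.sum_eq_zero_iff_of_nonneg
      (fun i _ => Finset.sum_nonneg fun k _ => by positivity)).mp hlast'.symm
    intro i _ k hk
    exact (Finset.sum_eq_zero_iff_of_nonneg (fun k _ => by positivity)).mp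
      (h i (Finset.mem_univ i)) k hk
  exact_mod_cast hz i (Finset.mem_univ i) j hj
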